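/- arXiv:math/0702395 — 3 statements merged into one kernel-verified Lean document; each statement's English description precedes it below -/
import Mathlib

section
/- Define the reduced rank χ₀(H) = max(0, rank(H) − 1) for a finitely generated free group H. If U and V are finitely generated subgroups of a free group F with U of finite index n in F, then for any subgroup V, χ₀(U ∩ V) ≤ n · χ₀(V). -/
/-!
Sharp Schreier bound: if `H` has index `n` in a group generated by a finite set `S`, build a right
transversal `R ∋ 1` greedily, each time adding `r * s` or `r * s⁻¹` (`r ∈ R`, `s ∈ S`) for a coset
not yet represented. Every added element produces a pair `(r, s) ∈ R × S` with `r * s ∈ R`, whose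
Schreier generator is trivial, so at least `n - 1` of the `n * #S` Schreier generators may be
dropped: `rank H - 1 ≤ n * (rank G - 1)`. Applied to `U ⊓ V ≃* U.subgroupOf V` inside `V`, whose
index `[V : U ⊓ V]` is at most `[F : U] = n`, this is the theorem.
-/

open scoped Classical

/-- The reduced rank `χ₀(H) = max(0, rank H − 1)` of a subgroup (0 if not f.g.). -/
noncomputable def chi0 {G : Type*} [Group G] (H : Subgroup G) : ℕ :=
  if h : Group.FG H then @Group.rank H _ h - 1 else 0

namespace Subgroup

open QuotientGroup Finset

variable {G : Type*} [Group G] {H : Subgroup G}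

theorem mk_rightRel_mul_right {a b : G}
    (h : Quotient.mk (rightRel H) a = Quotient.mk (rightRel H) b) (c : G) :
    Quotient.mk (rightRel H) (a * c) = Quotient.mk (rightRel H) (b * c) := by
  rw [Quotient.eq, rightRel_apply] at h ⊢
  simpa [mul_assoc] using h

theorem IsComplement.toRightFun_eq_self {R : Set G} (hR : IsComplement (H : Set G) R) {g : G}
    (hg : g ∈ R) : (hR.toRightFun g : G) = g :=
  congrArg Subtype.val <| (isComplement_subgroup_left_iff_existsUnique_quotientMk''.mp hR
    (Quotient.mk'' g)).unique (hR.mk''_rightQuotientEquiv _) (y₂ := ⟨g, hg⟩) rfl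

theorem isComplement_of_injOn_of_surjOn {R : Set G}
    (hinj : Set.InjOn (Quotient.mk (rightRel H)) R)
    (hsurj : Set.SurjOn (Quotient.mk (rightRel H)) R Set.univ) :
    IsComplement (H : Set G) R := by
  refine isComplement_subgroup_left_iff_existsUnique_quotientMk''.mpr fun q => ?_
  obtain ⟨g, hg, rfl⟩ := hsurj (Set.mem_univ q)
  exact ⟨⟨g, hg⟩, rfl, fun t ht => Subtype.ext (hinj t.2 hg ht)⟩

theorem ncard_le_index_of_injOn [H.FiniteIndex] {R : Set G}
    (hinj : Set.InjOn (Quotient.mk (rightRel H)) R) : R.ncard ≤ H.index := by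
  have : Finite (Quotient (rightRel H)) :=
    .of_equiv _ (quotientRightRelEquivQuotientLeftRel H).symm
  rw [← hinj.ncard_image, index_eq_card, ← Nat.card_congr (quotientRightRelEquivQuotientLeftRel H)]
  exact Set.ncard_le_card _

theorem exists_mk_mul_notMem_image {R S : Set G} (hS : closure S = ⊤) (hR1 : (1 : G) ∈ R)
    (hR : ¬ Set.SurjOn (Quotient.mk (rightRel H)) R Set.univ) :
    ∃ r ∈ R, ∃ s ∈ S, Quotient.mk (rightRel H) (r * s) ∉ Quotient.mk (rightRel H) '' R ∨
      Quotient.mk (rightRel H) (r * s⁻¹) ∉ Quotient.mk (rightRel H) '' R := by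
  by_contra! hstable
  refine hR fun q _ => Quotient.inductionOn q fun g => ?_
  induction (hS ▸ mem_top g : g ∈ closure S) using closure_induction_right with
  | one => exact ⟨1, hR1, rfl⟩
  | mul_right x _ s hs ih =>
    obtain ⟨r, hr, hrx⟩ := ih
    exact mk_rightRel_mul_right hrx s ▸ (hstable r hr s hs).1
  | mul_inv_cancel x _ s hs ih =>
    obtain ⟨r, hr, hrx⟩ := ih
    exact mk_rightRel_mul_right hrx s⁻¹ ▸ (hstable r hr s hs).2

/-- When `R` is a right transversal, these are the pairs `(r, s)` whose Schreier generator
`r * s * (hR.toRightFun (r * s))⁻¹` is trivial. -/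
noncomputable def closedPairs (R S : Finset G) : Finset (G × G) :=
  (R ×ˢ S).filter fun p => p.1 * p.2 ∈ R

theorem closedPairs_mono {R R' : Finset G} (h : R ⊆ R') (S : Finset G) :
    closedPairs R S ⊆ closedPairs R' S :=
  fun _ hp => by
    simp only [closedPairs, mem_filter, mem_product] at hp ⊢
    exact ⟨⟨h hp.1.1, hp.1.2⟩, h hp.2⟩

theorem exists_card_closedPairs_lt_insert {R S : Finset G} (hS : closure (S : Set G) = ⊤)
    (hR1 : (1 : G) ∈ R) (hR : ¬ Set.SurjOn (Quotient.mk (rightRel H)) R Set.univ) :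
    ∃ x, Quotient.mk (rightRel H) x ∉ Quotient.mk (rightRel H) '' R ∧
      #(closedPairs R S) < #(closedPairs (insert x R) S) := by
  obtain ⟨r, hr, s, hs, hrs | hrs⟩ := exists_mk_mul_notMem_image hS hR1 hR
  · refine ⟨r * s, hrs, card_lt_card <| (ssubset_iff_of_subset <|
      closedPairs_mono (subset_insert _ _) S).mpr ⟨(r, s), ?_, ?_⟩⟩
    · simp [closedPairs, mem_coe.mp hr, mem_coe.mp hs]
    · simp only [closedPairs, mem_filter]
      exact fun h => hrs ⟨_, h.2, rfl⟩
  · refine ⟨r * s⁻¹, hrs, card_lt_card <| (ssubset_iff_of_subset <|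
      closedPairs_mono (subset_insert _ _) S).mpr ⟨(r * s⁻¹, s), ?_, ?_⟩⟩
    · simp [closedPairs, mem_coe.mp hr, mem_coe.mp hs]
    · simp only [closedPairs, mem_filter, mem_product]
      exact fun h => hrs ⟨_, h.1.1, rfl⟩

theorem exists_isComplement_card_le_card_closedPairs_add_one [H.FiniteIndex] {S : Finset G}
    (hS : closure (S : Set G) = ⊤) :
    ∃ R : Finset G, IsComplement (H : Set G) R ∧ (1 : G) ∈ R ∧ #R ≤ #(closedPairs R S) + 1 := by
  let P : Finset G → Prop := fun R =>
    (1 : G) ∈ R ∧ Set.InjOn (Quotient.mk (rightRel H)) R ∧ #R ≤ #(closedPairs R S) + 1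
  -- a largest such `R` meets every coset, since otherwise it could be enlarged
  obtain ⟨R, ⟨hR1, hRinj, hRcard⟩, hRmax⟩ := (measure fun R : Finset G => H.index - #R).wf.has_min
    {R | P R} ⟨{1}, mem_singleton_self 1, by simp, by simp⟩
  refine ⟨R, isComplement_of_injOn_of_surjOn hRinj ?_, hR1, hRcard⟩
  by_contra hsurj
  obtain ⟨x, hx, hlt⟩ := exists_card_closedPairs_lt_insert hS hR1 hsurj
  have hxR : x ∉ R := fun h => hx ⟨x, h, rfl⟩
  have hinj : Set.InjOn (Quotient.mk (rightRel H)) ↑(insert x R) := by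
    rw [coe_insert, Set.injOn_insert (by exact_mod_cast hxR)]
    exact ⟨hRinj, hx⟩
  have hbound := ncard_le_index_of_injOn hinj
  rw [Set.ncard_coe_finset, card_insert_of_notMem hxR] at hbound
  refine hRmax (insert x R) ⟨mem_insert_of_mem hR1, hinj, ?_⟩ ?_
  · rw [card_insert_of_notMem hxR]; omega
  · show H.index - #(insert x R) < H.index - #R
    rw [card_insert_of_notMem hxR]; omega

theorem exists_finset_card_add_card_closedPairs_le {R S : Finset G}
    (hR : IsComplement (H : Set G) R) (hR1 : (1 : G) ∈ R) (hS : closure (S : Set G) = ⊤) :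
    ∃ T : Finset H, #T + #(closedPairs R S) ≤ #R * #S ∧ closure (T : Set H) = ⊤ := by
  let schreierGen : G → H := fun g => ⟨g * (hR.toRightFun g : G)⁻¹, hR.mul_inv_toRightFun_mem g⟩
  let openPairs := (R ×ˢ S).filter fun p => p.1 * p.2 ∉ R
  refine ⟨openPairs.image fun p => schreierGen (p.1 * p.2), ?_, ?_⟩
  · calc _ ≤ #openPairs + #(closedPairs R S) := Nat.add_le_add_right card_image_le _
      _ = #R * #S := by
        rw [add_comm, closedPairs, card_filter_add_card_filter_not, card_product]
  · rw [eq_top_iff, ← closure_insert_one, ← closure_mul_image_eq_top hR hR1 hS]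
    refine closure_mono ?_
    rintro _ ⟨_, ⟨r, hr, s, hs, rfl⟩, rfl⟩
    by_cases hrs : r * s ∈ R
    · left
      ext
      simp [hR.toRightFun_eq_self (mem_coe.mpr hrs)]
    · right
      have hopen : (r, s) ∈ openPairs := mem_filter.mpr ⟨mem_product.mpr ⟨hr, hs⟩, hrs⟩
      exact mem_image_of_mem _ hopen

variable (H) in
theorem exists_finset_card_add_index_le [H.FiniteIndex] {S : Finset G}
    (hS : closure (S : Set G) = ⊤) :
    ∃ T : Finset H, #T + H.index ≤ H.index * #S + 1 ∧ closure (T : Set H) = ⊤ := by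
  obtain ⟨R, hR, hR1, hRpairs⟩ := exists_isComplement_card_le_card_closedPairs_add_one (H := H) hS
  obtain ⟨T, hT, hTtop⟩ := exists_finset_card_add_card_closedPairs_le hR hR1 hS
  have hRcard : #R = H.index := by rw [← hR.ncard_right, Set.ncard_coe_finset]
  exact ⟨T, by rw [← hRcard]; omega, hTtop⟩

variable (H) in
theorem rank_add_index_le [Group.FG G] [H.FiniteIndex] :
    Group.rank H + H.index ≤ H.index * Group.rank G + 1 := by
  obtain ⟨S, hScard, hS⟩ := Group.rank_spec G
  obtain ⟨T, hT, hTtop⟩ := exists_finset_card_add_index_le H hS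
  have := Group.rank_le hTtop
  rw [hScard] at hT
  omega

end Subgroup

theorem chi0_eq_rank_sub_one {G : Type*} [Group G] (H : Subgroup G) [Group.FG H] :
    chi0 H = Group.rank H - 1 :=
  dif_pos ‹_›

theorem chi0_inf_le_relIndex_mul {G : Type*} [Group G] (U V : Subgroup G) [Group.FG V]
    [U.IsFiniteRelIndex V] : chi0 (U ⊓ V) ≤ U.relIndex V * chi0 V := by
  let e : U.subgroupOf V ≃* ↥(U ⊓ V) :=
    (MulEquiv.subgroupCongr (Subgroup.inf_subgroupOf_right U V).symm).trans
      (Subgroup.subgroupOfEquivOfLe inf_le_right)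
  have : Group.FG ↥(U ⊓ V) := Group.fg_of_surjective (f := e.toMonoidHom) e.surjective
  have hrank : Group.rank (U.subgroupOf V) + U.relIndex V ≤ U.relIndex V * Group.rank V + 1 :=
    Subgroup.rank_add_index_le _
  have hpos : 0 < U.relIndex V := Nat.pos_of_ne_zero Subgroup.relIndex_ne_zero
  rw [chi0_eq_rank_sub_one, chi0_eq_rank_sub_one, ← Group.rank_congr e, Nat.mul_sub_one]
  omega

theorem chi0_inf_le_index_mul_general (α : Type) (U V : Subgroup (FreeGroup α))
    (hV : Group.FG V) (n : ℕ) (hn : 0 < n) (hidx : U.index = n) :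
    chi0 (U ⊓ V) ≤ n * chi0 V := by
  have : U.IsFiniteRelIndex ⊤ := Subgroup.isFiniteRelIndex_top_iff.mpr ⟨hidx ▸ hn.ne'⟩
  have : U.IsFiniteRelIndex V := Subgroup.isFiniteRelIndex_of_le_right U le_top
  have hrel : U.relIndex V ≤ n := by
    rw [← hidx, ← Subgroup.relIndex_top_right]
    exact Subgroup.relIndex_le_of_le_right le_top Subgroup.relIndex_ne_zero
  calc chi0 (U ⊓ V) ≤ U.relIndex V * chi0 V := chi0_inf_le_relIndex_mul U V
    _ ≤ n * chi0 V := Nat.mul_le_mul_right _ hrel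

/-- If `U` has finite index `n` in a free group `F` and `V` is a finitely generated
subgroup, then `χ₀(U ∩ V) ≤ n * χ₀(V)`. -/
theorem chi0_inf_le_index_mul (α : Type) (U V : Subgroup (FreeGroup α))
    (hU : Group.FG U) (hV : Group.FG V) (n : ℕ) (hn : 0 < n) (hidx : U.index = n) :
    chi0 (U ⊓ V) ≤ n * chi0 V :=
  chi0_inf_le_index_mul_general α U V hV n hn hidx
end

section
/- Howson's theorem: the intersection of two finitely generated subgroups of a free group is finitely generated. -/
/-!
Every suffix of the reduced word of an element of `H = closure T` lies in a left coset `q H`, where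
`q` is `1` or a suffix of a generator; so when `T` is finite, the suffixes of elements of `H`
meet only finitely many left cosets of `H`. This finiteness passes to `U ⊓ V`, since a coset of
`U ⊓ V` is determined by the cosets of `U` and of `V` containing it. Conversely, if the suffixes
meet finitely many cosets, with representatives `R`, and only finitely many letters occur, then
peeling off one letter at a time writes each `w ∈ H` as a product of the finitely many elements
of `H` of the form `r⁻¹` or `r⁻¹ * a * r'` with `r, r' ∈ R` and `a` a letter.
-/

open Pointwise

theorem Subgroup.finite_image_mk_inf {G : Type*} [Group G] {U V : Subgroup G} {S : Set G}
    (hU : (((↑) : G → G ⧸ U) '' S).Finite) (hV : (((↑) : G → G ⧸ V) '' S).Finite) :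
    (((↑) : G → G ⧸ (U ⊓ V)) '' S).Finite := by
  let f : G ⧸ (U ⊓ V) → (G ⧸ U) × (G ⧸ V) := fun q =>
    (quotientMapOfLE inf_le_left q, quotientMapOfLE inf_le_right q)
  have hf : f.Injective := by
    intro q₁ q₂ h
    induction q₁ using QuotientGroup.induction_on
    induction q₂ using QuotientGroup.induction_on
    simp only [f, Prod.mk.injEq, quotientMapOfLE_apply_mk, QuotientGroup.eq] at h ⊢
    exact Subgroup.mem_inf.mpr h
  refine Set.Finite.of_finite_image ((hU.prod hV).subset ?_) hf.injOn
  rintro _ ⟨_, ⟨p, hp, rfl⟩, rfl⟩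
  exact ⟨⟨p, hp, rfl⟩, ⟨p, hp, rfl⟩⟩

namespace FreeGroup

variable {α : Type*} [DecidableEq α]

def suffixes (x : FreeGroup α) : Set (FreeGroup α) :=
  mk '' {s | s <:+ x.toWord}

theorem self_mem_suffixes (x : FreeGroup α) : x ∈ suffixes x :=
  ⟨x.toWord, List.suffix_refl _, mk_toWord⟩

theorem suffixes_finite (x : FreeGroup α) : (suffixes x).Finite := by
  simpa only [suffixes, ← List.mem_tails] using x.toWord.tails.finite_toSet.image mk

theorem suffixes_one : suffixes (1 : FreeGroup α) = {1} := by
  simp [suffixes, List.suffix_nil, one_eq_mk]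

theorem toWord_mk_singleton_mul (l : α × Bool) (x : FreeGroup α) :
    (mk [l] * x).toWord = l :: x.toWord ∨ (mk [l] * x).toWord = x.toWord.tail := by
  rw [toWord_mul, toWord_mk, reduce_singleton, List.singleton_append, reduce.cons, reduce_toWord]
  rcases x.toWord with _ | ⟨hd, tl⟩
  · simp
  · dsimp only
    split_ifs <;> simp

theorem suffixes_mk_singleton_mul (l : α × Bool) (x : FreeGroup α) :
    suffixes (mk [l] * x) ⊆ insert (mk [l] * x) (suffixes x) := by
  rintro _ ⟨s, hs, rfl⟩
  rcases toWord_mk_singleton_mul l x with h | h <;> rw [h] at hs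
  · rcases List.suffix_cons_iff.mp hs with rfl | hs
    · left
      rw [← h, mk_toWord]
    · exact Or.inr ⟨s, hs, rfl⟩
  · exact Or.inr ⟨s, hs.trans (List.tail_suffix _), rfl⟩

theorem suffixes_mul (x y : FreeGroup α) :
    suffixes (x * y) ⊆ suffixes y ∪ (· * y) '' suffixes x := by
  induction hx : x.toWord generalizing x with
  | nil => rw [toWord_eq_nil_iff.mp hx, one_mul]; exact Set.subset_union_left
  | cons l t ih =>
    have hred : IsReduced (l :: t) := hx ▸ isReduced_toWord
    have ht : (mk t).toWord = t := by
      rw [toWord_mk, (hred.infix (List.suffix_cons l t).isInfix).reduce_eq]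
    have hxy : x * y = mk [l] * (mk t * y) := by
      rw [← mul_assoc, mul_mk, List.singleton_append, ← hx, mk_toWord]
    have hsub : suffixes (mk t) ⊆ suffixes x := by
      rintro _ ⟨s, hs, rfl⟩
      exact ⟨s, hx ▸ (ht ▸ hs).trans (List.suffix_cons l t), rfl⟩
    rw [hxy]
    refine (suffixes_mk_singleton_mul l _).trans (Set.insert_subset ?_ ((ih _ ht).trans ?_))
    · exact Or.inr ⟨x, self_mem_suffixes x, hxy⟩
    · exact Set.union_subset_union_right _ (Set.image_mono hsub)

theorem suffixes_inv (x : FreeGroup α) : suffixes x⁻¹ ⊆ (· * x⁻¹) '' suffixes x := by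
  rintro _ ⟨s, ⟨t, hts⟩, rfl⟩
  rw [toWord_inv] at hts
  have hx : x.toWord = invRev s ++ invRev t := by rw [← invRev_append, hts, invRev_invRev]
  have hx' : x = (mk s)⁻¹ * (mk t)⁻¹ := by rw [inv_mk, inv_mk, mul_mk, ← hx, mk_toWord]
  refine ⟨mk (invRev t), ⟨invRev t, ⟨invRev s, hx.symm⟩, rfl⟩, ?_⟩
  rw [hx', ← inv_mk]
  group

theorem suffixes_subset_mul_closure {T : Set (FreeGroup α)} {h : FreeGroup α}
    (hh : h ∈ Subgroup.closure T) :
    suffixes h ⊆ insert 1 (⋃ g ∈ T, suffixes g) * (Subgroup.closure T : Set (FreeGroup α)) := by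
  set QK := insert 1 (⋃ g ∈ T, suffixes g) * (Subgroup.closure T : Set (FreeGroup α))
  have mul_mem_right {p y : FreeGroup α} (hp : p ∈ QK) (hy : y ∈ Subgroup.closure T) :
      p * y ∈ QK := by
    obtain ⟨q, hq, u, hu, rfl⟩ := hp
    exact ⟨q, hq, u * y, mul_mem hu hy, (mul_assoc q u y).symm⟩
  induction hh using Subgroup.closure_induction with
  | mem g hg => exact fun p hp => ⟨p, Or.inr (Set.mem_biUnion hg hp), 1, one_mem _, mul_one p⟩
  | one =>
    rw [suffixes_one]
    rintro _ rfl
    exact ⟨1, Or.inl rfl, 1, one_mem _, mul_one 1⟩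
  | mul x y _ hy ihx ihy =>
    refine (suffixes_mul x y).trans (Set.union_subset ihy ?_)
    rintro _ ⟨p, hp, rfl⟩
    exact mul_mem_right (ihx hp) hy
  | inv x hx ihx =>
    refine (suffixes_inv x).trans ?_
    rintro _ ⟨p, hp, rfl⟩
    exact mul_mem_right (ihx hp) (inv_mem hx)

theorem finite_image_suffixes_closure {T : Set (FreeGroup α)} (hT : T.Finite) :
    (((↑) : FreeGroup α → FreeGroup α ⧸ Subgroup.closure T) ''
      ⋃ h ∈ Subgroup.closure T, suffixes h).Finite := by
  refine (((hT.biUnion fun g _ => suffixes_finite g).insert 1).image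
    ((↑) : FreeGroup α → FreeGroup α ⧸ Subgroup.closure T)).subset ?_
  rintro _ ⟨p, hp, rfl⟩
  obtain ⟨h, hh, hp⟩ := Set.mem_iUnion₂.mp hp
  obtain ⟨q, hq, u, hu, rfl⟩ := suffixes_subset_mul_closure hh hp
  exact ⟨q, hq, QuotientGroup.eq.mpr (by simpa using hu)⟩

omit [DecidableEq α] in
theorem map_fst_invRev (w : List (α × Bool)) :
    (invRev w).map Prod.fst = (w.map Prod.fst).reverse := by
  simp [invRev, Function.comp_def]

theorem exists_mem_map_fst_toWord_of_mem_closure {T : Set (FreeGroup α)} {h : FreeGroup α}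
    (hh : h ∈ Subgroup.closure T) {a : α} (ha : a ∈ h.toWord.map Prod.fst) :
    ∃ g ∈ T, a ∈ g.toWord.map Prod.fst := by
  induction hh using Subgroup.closure_induction with
  | mem g hg => exact ⟨g, hg, ha⟩
  | one => simp [toWord_one] at ha
  | mul x y _ _ ihx ihy =>
    have hxy := ((toWord_mul_sublist x y).map Prod.fst).subset ha
    rw [List.map_append, List.mem_append] at hxy
    exact hxy.elim ihx ihy
  | inv x _ ihx =>
    rw [toWord_inv, map_fst_invRev, List.mem_reverse] at ha
    exact ihx ha

theorem le_closure_of_forall_suffixes (H : Subgroup (FreeGroup α)) {R L : Set (FreeGroup α)}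
    (hR : ∀ p ∈ ⋃ h ∈ H, suffixes h, ∃ r ∈ R, r⁻¹ * p ∈ H)
    (hL : ∀ h ∈ H, ∀ l ∈ h.toWord, mk [l] ∈ L) :
    H ≤ Subgroup.closure ((H : Set (FreeGroup α)) ∩ (R⁻¹ ∪ R⁻¹ * L * R)) := by
  set K := Subgroup.closure ((H : Set (FreeGroup α)) ∩ (R⁻¹ ∪ R⁻¹ * L * R))
  intro w hw
  have key : ∀ t, t <:+ w.toWord → ∀ r ∈ R, r⁻¹ * mk t ∈ H → r⁻¹ * mk t ∈ K := by
    intro t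
    induction t with
    | nil =>
      intro _ r hr hrH
      rw [← one_eq_mk, mul_one] at hrH ⊢
      exact Subgroup.subset_closure ⟨hrH, Or.inl (Set.inv_mem_inv.mpr hr)⟩
    | cons l t ih =>
      intro hlt r hr hrH
      have ht := (List.suffix_cons l t).trans hlt
      obtain ⟨r', hr', hr'H⟩ := hR (mk t) (Set.mem_biUnion hw ⟨t, ht, rfl⟩)
      have hsplit : r⁻¹ * mk (l :: t) = (r⁻¹ * mk [l] * r') * (r'⁻¹ * mk t) := by
        rw [← List.singleton_append, ← mul_mk]; group
      have hg : r⁻¹ * mk [l] * r' ∈ (H : Set (FreeGroup α)) ∩ (R⁻¹ ∪ R⁻¹ * L * R) := by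
        refine ⟨?_, Or.inr (Set.mul_mem_mul (Set.mul_mem_mul (Set.inv_mem_inv.mpr hr)
          (hL w hw l (hlt.subset List.mem_cons_self))) hr')⟩
        rw [hsplit] at hrH
        exact (mul_mem_cancel_right hr'H).mp hrH
      rw [hsplit]
      exact mul_mem (Subgroup.subset_closure hg) (ih ht r' hr' hr'H)
  obtain ⟨r, hr, hrw⟩ := hR w (Set.mem_biUnion hw (self_mem_suffixes w))
  have hr_inv : r⁻¹ ∈ K :=
    Subgroup.subset_closure ⟨(mul_mem_cancel_right hw).mp hrw, Or.inl (Set.inv_mem_inv.mpr hr)⟩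
  have hrw' := key _ (List.suffix_refl _) r hr (by rwa [mk_toWord])
  rw [mk_toWord] at hrw'
  simpa using mul_mem (inv_mem hr_inv) hrw'

theorem fg_of_finite_image_suffixes (H : Subgroup (FreeGroup α)) {A : Set α} (hA : A.Finite)
    (hH : ∀ h ∈ H, ∀ a ∈ h.toWord.map Prod.fst, a ∈ A)
    (hsuf : (((↑) : FreeGroup α → FreeGroup α ⧸ H) '' ⋃ h ∈ H, suffixes h).Finite) : H.FG := by
  set R := Quotient.out '' (((↑) : FreeGroup α → FreeGroup α ⧸ H) '' ⋃ h ∈ H, suffixes h)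
  set L := (fun l => mk [l]) '' (A ×ˢ Set.univ)
  have hR : ∀ p ∈ ⋃ h ∈ H, suffixes h, ∃ r ∈ R, r⁻¹ * p ∈ H := fun p hp =>
    ⟨_, ⟨_, ⟨p, hp, rfl⟩, rfl⟩, QuotientGroup.eq.mp (QuotientGroup.out_eq' _)⟩
  have hL : ∀ h ∈ H, ∀ l ∈ h.toWord, mk [l] ∈ L := fun h hh l hl =>
    ⟨l, ⟨hH h hh _ (List.mem_map_of_mem hl), trivial⟩, rfl⟩
  have hRfin : R.Finite := hsuf.image _
  have hLfin : L.Finite := (hA.prod Set.finite_univ).image _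
  refine (Subgroup.fg_iff H).mpr ⟨_, le_antisymm ((Subgroup.closure_le H).mpr
    Set.inter_subset_left) (le_closure_of_forall_suffixes H hR hL), ?_⟩
  exact (hRfin.inv.union ((hRfin.inv.mul hLfin).mul hRfin)).inter_of_right _

end FreeGroup

/-- Howson's theorem: the intersection of two finitely generated subgroups of a free
group is finitely generated. -/
theorem howson (α : Type) (U V : Subgroup (FreeGroup α))
    (hU : Group.FG U) (hV : Group.FG V) : Group.FG ↥(U ⊓ V) := by
  classical
  rw [Group.fg_iff_subgroup_fg] at hU hV ⊢
  obtain ⟨S, rfl, hS⟩ := (Subgroup.fg_iff U).mp hU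
  obtain ⟨T, rfl, hT⟩ := (Subgroup.fg_iff V).mp hV
  refine FreeGroup.fg_of_finite_image_suffixes _
    (A := ⋃ g ∈ S, {a | a ∈ g.toWord.map Prod.fst}) (hS.biUnion fun g _ => List.finite_toSet _)
    (fun h hh a ha => ?_) ?_
  · obtain ⟨g, hg, hga⟩ := FreeGroup.exists_mem_map_fst_toWord_of_mem_closure
      (Subgroup.mem_inf.mp hh).1 ha
    exact Set.mem_biUnion hg hga
  · refine Subgroup.finite_image_mk_inf ((FreeGroup.finite_image_suffixes_closure hS).subset ?_)
      ((FreeGroup.finite_image_suffixes_closure hT).subset ?_)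
    · exact Set.image_mono (Set.biUnion_subset_biUnion_left fun h hh => (Subgroup.mem_inf.mp hh).1)
    · exact Set.image_mono (Set.biUnion_subset_biUnion_left fun h hh => (Subgroup.mem_inf.mp hh).2)
end

section
/- If the Strengthened Hanna Neumann inequality ∑_{x∈T} χ₀(U ∩ x⁻¹Vx) ≤ χ₀(U)χ₀(V) holds for all finitely generated subgroups U, V of the free group of rank 2, then it holds for all finitely generated subgroups of any finitely generated free group. -/
open scoped Classical

/-- The conjugate subgroup `x⁻¹ H x`. -/
def conjSubgroup {G : Type*} [Group G] (x : G) (H : Subgroup G) : Subgroup G :=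
  H.map (MulAut.conj x⁻¹).toMonoidHom

/-- The Strengthened Hanna Neumann inequality for the pair `U, V`: for any finite set
of representatives of pairwise distinct double cosets `VxU`,
`∑_{x∈T} χ₀(U ∩ x⁻¹Vx) ≤ χ₀(U)·χ₀(V)`. -/
noncomputable def SHNIneq {G : Type*} [Group G] (U V : Subgroup G) : Prop :=
  ∀ T : Finset G, (∀ x ∈ T, ∀ y ∈ T, DoubleCoset.mk V U x = DoubleCoset.mk V U y → x = y) →
    ∑ x ∈ T, chi0 (U ⊓ conjSubgroup x V) ≤ chi0 U * chi0 V

/-!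
The free group of countable rank embeds in `F(a, b)` by `k ↦ aᵏ b a⁻ᵏ`: composed with the map
`F(a, b) → F(ℤ) ⋊ ℤ` sending `a` to the shift and `b` to the generator `0`, this embedding becomes
the inclusion of the normal factor `F(ℤ)`. An injective homomorphism preserves the reduced ranks of
subgroups, commutes with intersections and conjugation, and maps distinct double cosets to
distinct double cosets, so the inequality for `U, V` follows from the one for their images.
-/

namespace FreeGroup

def intShift : Multiplicative ℤ →* MulAut (FreeGroup ℤ) where
  toFun k := freeGroupCongr (Equiv.addLeft k.toAdd)
  map_one' := MulEquiv.toMonoidHom_injective <| by ext; simp [freeGroupCongr]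
  map_mul' k l := MulEquiv.toMonoidHom_injective <| by ext; simp [freeGroupCongr, add_assoc]

lemma intShift_of (k j : ℤ) : intShift (.ofAdd k) (of j) = of (k + j) := by
  simp [intShift, freeGroupCongr]

def conjPowers : FreeGroup ℤ →* FreeGroup (Fin 2) :=
  lift fun k => of 0 ^ k * of 1 * (of 0 ^ k)⁻¹

def toShiftProduct : FreeGroup (Fin 2) →* FreeGroup ℤ ⋊[intShift] Multiplicative ℤ :=
  lift ![SemidirectProduct.inr (.ofAdd 1), SemidirectProduct.inl (of 0)]

lemma toShiftProduct_comp_conjPowers :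
    toShiftProduct.comp conjPowers = SemidirectProduct.inl := by
  refine ext_hom _ _ fun k => ?_
  have ha : toShiftProduct (of 0) = SemidirectProduct.inr (.ofAdd 1) := lift_apply_of
  have hb : toShiftProduct (of 1) = SemidirectProduct.inl (of 0) := lift_apply_of
  have ha_zpow : toShiftProduct (of 0) ^ k = SemidirectProduct.inr (.ofAdd k) := by
    rw [ha, ← map_zpow, ← ofAdd_zsmul, zsmul_one, Int.cast_id]
  rw [MonoidHom.comp_apply, conjPowers, lift_apply_of, _root_.map_mul, _root_.map_mul,
    _root_.map_inv, map_zpow, ha_zpow, hb, ← _root_.map_inv, ← SemidirectProduct.inl_aut,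
    intShift_of, add_zero]

lemma conjPowers_injective : Function.Injective conjPowers := by
  refine Function.Injective.of_comp (f := toShiftProduct) ?_
  rw [← MonoidHom.coe_comp, toShiftProduct_comp_conjPowers]
  exact SemidirectProduct.inl_injective

lemma exists_injective_hom_fin_two (ι : Type*) [Countable ι] :
    ∃ φ : FreeGroup ι →* FreeGroup (Fin 2), Function.Injective φ := by
  obtain ⟨f, hf⟩ := Countable.exists_injective_nat ι
  exact ⟨conjPowers.comp (map fun i => (f i : ℤ)),
    conjPowers_injective.comp (map_injective (Nat.cast_injective.comp hf))⟩

end FreeGroup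

section Transfer

variable {G K : Type*} [Group G] [Group K]

lemma Group.FG.subgroup_map {S : Subgroup G} (hS : Group.FG S) (φ : G →* K) :
    Group.FG (S.map φ) :=
  Group.fg_of_surjective (φ.subgroupMap_surjective S)

lemma chi0_congr {H : Subgroup G} {L : Subgroup K} (e : H ≃* L) : chi0 H = chi0 L := by
  unfold chi0
  by_cases hH : Group.FG H
  · have hL : Group.FG L := Group.fg_of_surjective (f := e.toMonoidHom) e.surjective
    rw [dif_pos hH, dif_pos hL, Group.rank_congr e]
  · have hL : ¬ Group.FG L := fun hL =>
      hH (Group.fg_of_surjective (f := e.symm.toMonoidHom) e.symm.surjective)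
    rw [dif_neg hH, dif_neg hL]

lemma chi0_map {φ : G →* K} (hφ : Function.Injective φ) (S : Subgroup G) :
    chi0 (S.map φ) = chi0 S :=
  (chi0_congr (S.equivMapOfInjective φ hφ)).symm

lemma conjSubgroup_map (φ : G →* K) (x : G) (V : Subgroup G) :
    (conjSubgroup x V).map φ = conjSubgroup (φ x) (V.map φ) := by
  unfold conjSubgroup
  rw [Subgroup.map_map, Subgroup.map_map]
  congr 1
  ext g
  simp [MulAut.conj]

lemma DoubleCoset.mk_eq_of_map_eq {φ : G →* K} (hφ : Function.Injective φ)
    {U V : Subgroup G} {x y : G}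
    (h : DoubleCoset.mk (V.map φ) (U.map φ) (φ x) = DoubleCoset.mk (V.map φ) (U.map φ) (φ y)) :
    DoubleCoset.mk V U x = DoubleCoset.mk V U y := by
  obtain ⟨_, ⟨v, hv, rfl⟩, _, ⟨u, hu, rfl⟩, hy⟩ := (DoubleCoset.eq _ _ _ _).1 h
  exact (DoubleCoset.eq V U x y).2 ⟨v, hv, u, hu, hφ (by simpa using hy)⟩

lemma SHNIneq.of_map {φ : G →* K} (hφ : Function.Injective φ) {U V : Subgroup G}
    (h : SHNIneq (U.map φ) (V.map φ)) : SHNIneq U V := by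
  intro T hT
  have hT' : ∀ x ∈ T.image φ, ∀ y ∈ T.image φ,
      DoubleCoset.mk (V.map φ) (U.map φ) x = DoubleCoset.mk (V.map φ) (U.map φ) y → x = y := by
    simp only [Finset.mem_image]
    rintro _ ⟨x, hx, rfl⟩ _ ⟨y, hy, rfl⟩ hxy
    exact congrArg φ (hT x hx y hy (DoubleCoset.mk_eq_of_map_eq hφ hxy))
  calc ∑ x ∈ T, chi0 (U ⊓ conjSubgroup x V)
      = ∑ x ∈ T.image φ, chi0 (U.map φ ⊓ conjSubgroup x (V.map φ)) := by
        rw [Finset.sum_image fun x _ y _ hxy => hφ hxy]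
        refine Finset.sum_congr rfl fun x _ => ?_
        rw [← conjSubgroup_map, ← Subgroup.map_inf _ _ φ hφ, chi0_map hφ]
    _ ≤ chi0 (U.map φ) * chi0 (V.map φ) := h _ hT'
    _ = chi0 U * chi0 V := by rw [chi0_map hφ, chi0_map hφ]

end Transfer

/-- If the Strengthened Hanna Neumann inequality holds for all finitely generated
subgroups of the free group of rank 2, it holds in every finitely generated free
group. -/
theorem shn_of_rank_two
    (h : ∀ U V : Subgroup (FreeGroup (Fin 2)), Group.FG U → Group.FG V → SHNIneq U V) :
    ∀ (n : ℕ) (U V : Subgroup (FreeGroup (Fin n))),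
      Group.FG U → Group.FG V → SHNIneq U V := by
  intro n U V hU hV
  obtain ⟨φ, hφ⟩ := FreeGroup.exists_injective_hom_fin_two (Fin n)
  exact SHNIneq.of_map hφ (h _ _ (hU.subgroup_map φ) (hV.subgroup_map φ))
end
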